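/- arXiv:1803.00572 — 3 statements merged into one kernel-verified Lean document; each statement's English description precedes it below -/
import Mathlib

section
/- Let d ≥ 1 and let W₁,…,W_{d²} be d×d complex matrices that are Hermitian, unitary, and satisfy Tr(W_k W_l) = d·δ_{kl} for all k, l (as is the case for the multi-qubit Pauli matrices when d = 2ⁿ). Define Q = (1/d²) Σ_{k=1}^{d²} W_k^{⊗4}, an operator on (ℂ^d)^{⊗4}. Then for all d×d complex matrices T₁, T₂, T₃, T₄: ‖Q (T₁ ⊗ T₂ ⊗ T₃ ⊗ T₄) Q‖_F ≤ (1/d) · ‖T₁‖_F ‖T₂‖_F ‖T₃‖_F ‖T₄‖_F. -/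
/- STATEMENT 12: Let W₁,…,W_{d²} be Hermitian unitary d×d matrices with
Tr(W_k W_l) = d·δ_{kl} (e.g. multi-qubit Pauli matrices) and Q = (1/d²) Σ_k W_k^{⊗4} on
(ℂ^d)^{⊗4}.  Then for all d×d matrices T₁,…,T₄:
‖Q (T₁⊗T₂⊗T₃⊗T₄) Q‖_F ≤ (1/d)·‖T₁‖_F‖T₂‖_F‖T₃‖_F‖T₄‖_F. -/

open Matrix
open scoped Kronecker

noncomputable section

def fnorm {m : Type*} [Fintype m] (M : Matrix m m ℂ) : ℝ :=
  Real.sqrt ((Mᴴ * M).trace.re)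

/-
Expanding both copies of `Q` gives `Q (T₁ ⊗ T₂ ⊗ T₃ ⊗ T₄) Q = d⁻⁴ ∑_{k,l} A_{kl} ⊗ B_{kl}` with
`A_{kl} = W_k T₁ W_l` and `B_{kl} = ⨂_{i ≥ 2} W_k Tᵢ W_l`. The `W_k` are an orthogonal basis of
`M_d(ℂ)` with equal norms, hence a tight frame with bound `d`; twirling twice shows that the
`A_{kl}` form a tight frame with bound `d² ‖T₁‖²`. The synthesis matrix of a tight frame with
bound `c` is `√c` times a co-isometry, so `‖∑ A_{kl} ⊗ B_{kl}‖² ≤ d² ‖T₁‖² ∑ ‖B_{kl}‖²`, and by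
unitary invariance each of the `d⁴` terms `‖B_{kl}‖²` equals `‖T₂‖² ‖T₃‖² ‖T₄‖²`.
Altogether `‖Q T Q‖² ≤ d⁻⁸ · d² · d⁴ · ∏ ‖Tᵢ‖²`.
-/

open scoped ComplexOrder

variable {m n p q : Type*}

theorem mul_single_mul_conjTranspose_apply [Fintype n] [DecidableEq n] (X Y : Matrix m n ℂ)
    (a a' : m) (b b' : n) : (X * single b b' (1 : ℂ) * Yᴴ) a a' = X a b * star (Y a' b') := by
  simp [mul_apply, single_apply, ite_and, Finset.sum_ite_eq]

theorem mul_conjTranspose_self_eq_smul_one [Fintype m] [Fintype n] [DecidableEq m]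
    [DecidableEq n] (hcard : Fintype.card m = Fintype.card n) {F : Matrix m n ℂ} {c : ℂ}
    (h : Fᴴ * F = c • 1) : F * Fᴴ = c • 1 := by
  rcases eq_or_ne c 0 with rfl | hc
  · obtain rfl : F = 0 := conjTranspose_mul_self_eq_zero.mp (by simpa using h)
    simp
  have hinv : (c⁻¹ • Fᴴ) * F = 1 := by
    rw [Matrix.smul_mul, h, smul_smul, inv_mul_cancel₀ hc, one_smul]
  calc F * Fᴴ = c • (F * (c⁻¹ • Fᴴ)) := by
        rw [Matrix.mul_smul, smul_smul, mul_inv_cancel₀ hc, one_smul]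
    _ = c • 1 := by rw [(mul_eq_one_comm_of_card_eq n m ℂ hcard.symm).mp hinv]

section Frobenius

variable [Fintype m] [Fintype n] [Fintype p] [Fintype q]

def frobeniusNormSq (M : Matrix m n ℂ) : ℝ := (Mᴴ * M).trace.re

theorem fnorm_eq_sqrt_frobeniusNormSq (M : Matrix m m ℂ) : fnorm M = √(frobeniusNormSq M) :=
  rfl

theorem ofReal_frobeniusNormSq (M : Matrix m n ℂ) :
    (frobeniusNormSq M : ℂ) = (Mᴴ * M).trace := by
  have h : (Mᴴ * M).trace = ∑ j, ∑ i, (Complex.normSq (M i j) : ℂ) := by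
    simp [trace, mul_apply, Complex.normSq_eq_conj_mul_self]
  rw [frobeniusNormSq, h]
  norm_cast

theorem frobeniusNormSq_eq_sum (M : Matrix m n ℂ) :
    frobeniusNormSq M = ∑ i, ∑ j, Complex.normSq (M i j) := by
  have h := ofReal_frobeniusNormSq M
  simp only [trace, diag, mul_apply, conjTranspose_apply, RCLike.star_def,
    ← Complex.normSq_eq_conj_mul_self] at h
  rw [Finset.sum_comm]
  exact_mod_cast h

theorem frobeniusNormSq_nonneg (M : Matrix m n ℂ) : 0 ≤ frobeniusNormSq M := by
  rw [frobeniusNormSq_eq_sum]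
  exact Finset.sum_nonneg fun i _ => Finset.sum_nonneg fun j _ => Complex.normSq_nonneg _

theorem frobeniusNormSq_eq_of_equiv {m' n' : Type*} [Fintype m'] [Fintype n']
    {M : Matrix m n ℂ} {N : Matrix m' n' ℂ} (e : m × n ≃ m' × n')
    (h : ∀ i j, M i j = N (e (i, j)).1 (e (i, j)).2) :
    frobeniusNormSq M = frobeniusNormSq N := by
  simp only [frobeniusNormSq_eq_sum, ← Fintype.sum_prod_type']
  exact Fintype.sum_equiv e _ _ fun x => by rw [h]

theorem frobeniusNormSq_smul (s : ℂ) (M : Matrix m n ℂ) :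
    frobeniusNormSq (s • M) = Complex.normSq s * frobeniusNormSq M := by
  simp [frobeniusNormSq_eq_sum, Complex.normSq_mul, Finset.mul_sum]

theorem frobeniusNormSq_kronecker (A : Matrix m n ℂ) (B : Matrix p q ℂ) :
    frobeniusNormSq (A ⊗ₖ B) = frobeniusNormSq A * frobeniusNormSq B := by
  simp only [frobeniusNormSq_eq_sum, kroneckerMap_apply, Complex.normSq_mul,
    Fintype.sum_prod_type, Finset.sum_mul_sum]

theorem frobeniusNormSq_unitary_mul_mul [DecidableEq m] [DecidableEq n] {U : Matrix m m ℂ}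
    {V : Matrix n n ℂ} (hU : U ∈ unitaryGroup m ℂ) (hV : V ∈ unitaryGroup n ℂ)
    (M : Matrix m n ℂ) : frobeniusNormSq (U * M * V) = frobeniusNormSq M := by
  rw [mem_unitaryGroup_iff', star_eq_conjTranspose] at hU
  rw [mem_unitaryGroup_iff, star_eq_conjTranspose] at hV
  have h : (U * M * V)ᴴ * (U * M * V) = Vᴴ * (Mᴴ * M * V) := by
    simp only [conjTranspose_mul, Matrix.mul_assoc, ← Matrix.mul_assoc Uᴴ U, hU, Matrix.one_mul]
  rw [frobeniusNormSq, h, trace_mul_comm, Matrix.mul_assoc, hV, Matrix.mul_one, frobeniusNormSq]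

theorem frobeniusNormSq_mul_le [DecidableEq m] {c : ℝ} (hc : 0 ≤ c) {X : Matrix m n ℂ}
    (hX : X * Xᴴ = (c : ℂ) • 1) (Z : Matrix n p ℂ) :
    frobeniusNormSq (X * Z) ≤ c * frobeniusNormSq Z := by
  classical
  rcases hc.eq_or_lt with rfl | hc
  · obtain rfl : X = 0 := self_mul_conjTranspose_eq_zero.mp (by simpa using hX)
    simp [frobeniusNormSq]
  -- `P = Xᴴ X` satisfies `P² = c P`, so `A = c - P` satisfies `Aᴴ A = c A`,
  -- whence `c (c ‖Z‖² - ‖X Z‖²) = ‖A Z‖² ≥ 0`.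
  set A : Matrix n n ℂ := (c : ℂ) • 1 - Xᴴ * X
  have hA : Aᴴ * A = (c : ℂ) • A := by
    have hP : Xᴴ * X * (Xᴴ * X) = (c : ℂ) • (Xᴴ * X) := by
      rw [Matrix.mul_assoc, ← Matrix.mul_assoc X, hX]
      simp
    simp only [A, conjTranspose_sub, conjTranspose_smul, conjTranspose_mul,
      conjTranspose_conjTranspose, conjTranspose_one, Complex.star_def, Complex.conj_ofReal,
      Matrix.sub_mul, Matrix.mul_sub, Matrix.smul_mul, Matrix.mul_smul, hP, Matrix.one_mul,
      Matrix.mul_one, smul_sub, smul_smul]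
    abel
  have hAZ : frobeniusNormSq (A * Z) =
      c * (c * frobeniusNormSq Z - frobeniusNormSq (X * Z)) := by
    apply Complex.ofReal_injective
    push_cast
    simp only [ofReal_frobeniusNormSq]
    have h : (A * Z)ᴴ * (A * Z) = (c : ℂ) • ((c : ℂ) • (Zᴴ * Z) - (X * Z)ᴴ * (X * Z)) := by
      rw [conjTranspose_mul, Matrix.mul_assoc, ← Matrix.mul_assoc Aᴴ, hA]
      simp [A, conjTranspose_mul, Matrix.mul_assoc, Matrix.sub_mul, Matrix.mul_sub]
    rw [h, trace_smul, trace_sub, trace_smul, smul_eq_mul, smul_eq_mul]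
  nlinarith [frobeniusNormSq_nonneg (A * Z)]

end Frobenius

section TightFrame

variable {ι κ : Type*}

def synthesisMatrix (A : ι → Matrix m n ℂ) : Matrix (m × n) ι ℂ := of fun x i => A i x.1 x.2

variable [Fintype ι] [DecidableEq m] [DecidableEq n]

-- `synthesisMatrix A * (synthesisMatrix A)ᴴ` is the frame operator of the `A i`, viewed as
-- vectors of `ℂ^(m × n)`.
def IsTightFrame (A : ι → Matrix m n ℂ) (c : ℝ) : Prop :=
  synthesisMatrix A * (synthesisMatrix A)ᴴ = (c : ℂ) • 1

theorem isTightFrame_iff {A : ι → Matrix m n ℂ} {c : ℝ} :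
    IsTightFrame A c ↔ ∀ a b a' b',
      ∑ i, A i a b * star (A i a' b') = if a = a' ∧ b = b' then (c : ℂ) else 0 := by
  simp [IsTightFrame, ← Matrix.ext_iff, mul_apply, synthesisMatrix, one_apply, Prod.ext_iff]

variable [Fintype n]

theorem IsTightFrame.sum_mul_mul_conjTranspose {A : ι → Matrix m n ℂ} {c : ℝ}
    (h : IsTightFrame A c) (M : Matrix n n ℂ) :
    ∑ i, A i * M * (A i)ᴴ = ((c : ℂ) * M.trace) • 1 := by
  rw [isTightFrame_iff] at h
  ext a a'
  calc (∑ i, A i * M * (A i)ᴴ) a a' = ∑ y, ∑ x, M x y * ∑ i, A i a x * star (A i a' y) := by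
        simp only [Matrix.sum_apply, mul_apply, conjTranspose_apply, Finset.sum_mul,
          Finset.mul_sum]
        rw [Finset.sum_comm]
        refine Finset.sum_congr rfl fun y _ => ?_
        rw [Finset.sum_comm]
        exact Finset.sum_congr rfl fun x _ => Finset.sum_congr rfl fun i _ => by ring
    _ = _ := by
        simp only [h]
        by_cases ha : a = a' <;> simp [ha, one_apply, trace, Finset.mul_sum, mul_comm]

variable [Fintype κ] [Fintype p] [Fintype q]

theorem IsTightFrame.mul_mul [DecidableEq p] [DecidableEq q] {A : ι → Matrix m n ℂ}
    {B : κ → Matrix p q ℂ} {c c' : ℝ} (hA : IsTightFrame A c) (hB : IsTightFrame B c')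
    (T : Matrix n p ℂ) :
    IsTightFrame (fun x : ι × κ => A x.1 * T * B x.2) (c * c' * frobeniusNormSq T) := by
  rw [isTightFrame_iff]
  intro a b a' b'
  calc ∑ x : ι × κ, (A x.1 * T * B x.2) a b * star ((A x.1 * T * B x.2) a' b')
      = (∑ i, A i * T * (∑ j, B j * single b b' (1 : ℂ) * (B j)ᴴ) * (A i * T)ᴴ) a a' := by
        simp only [Fintype.sum_prod_type, ← mul_single_mul_conjTranspose_apply,
          Matrix.sum_apply, Matrix.mul_sum, Matrix.sum_mul]
        simp only [conjTranspose_mul, Matrix.mul_assoc]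
    _ = ((c' * (single b b' (1 : ℂ)).trace) • ∑ i, A i * (T * Tᴴ) * (A i)ᴴ) a a' := by
        rw [hB.sum_mul_mul_conjTranspose, Finset.smul_sum]
        simp only [conjTranspose_mul, Matrix.mul_smul, Matrix.smul_mul, Matrix.mul_one,
          Matrix.mul_assoc]
    _ = _ := by
        rw [hA.sum_mul_mul_conjTranspose, trace_mul_comm, ← ofReal_frobeniusNormSq]
        by_cases hb : b = b' <;> by_cases ha : a = a' <;> simp [ha, hb, one_apply]
        ring

variable [Fintype m]

theorem isTightFrame_of_trace_conjTranspose_mul [DecidableEq ι] {A : ι → Matrix m n ℂ} {c : ℝ}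
    (hcard : Fintype.card ι = Fintype.card m * Fintype.card n)
    (h : ∀ i j, ((A i)ᴴ * A j).trace = if i = j then (c : ℂ) else 0) : IsTightFrame A c := by
  refine mul_conjTranspose_self_eq_smul_one (by simp [hcard]) ?_
  ext i j
  have hij : ((synthesisMatrix A)ᴴ * synthesisMatrix A) i j = ((A i)ᴴ * A j).trace := by
    simp [mul_apply, synthesisMatrix, trace, Fintype.sum_prod_type]
    exact Finset.sum_comm
  rw [hij, h]
  simp [one_apply]

theorem IsTightFrame.frobeniusNormSq_sum_kronecker_le {A : ι → Matrix m n ℂ} {c : ℝ}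
    (h : IsTightFrame A c) (hc : 0 ≤ c) (B : ι → Matrix p q ℂ) :
    frobeniusNormSq (∑ i, A i ⊗ₖ B i) ≤ c * ∑ i, frobeniusNormSq (B i) := by
  have hreshape : frobeniusNormSq (∑ i, A i ⊗ₖ B i) =
      frobeniusNormSq (synthesisMatrix A * (synthesisMatrix B)ᵀ) :=
    frobeniusNormSq_eq_of_equiv (Equiv.prodProdProdComm m p n q) fun _ _ => by
      simp [mul_apply, synthesisMatrix, Matrix.sum_apply]
  have hB : frobeniusNormSq (synthesisMatrix B)ᵀ = ∑ i, frobeniusNormSq (B i) := by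
    simp [frobeniusNormSq_eq_sum, synthesisMatrix, Fintype.sum_prod_type]
  rw [hreshape, ← hB]
  exact frobeniusNormSq_mul_le hc h _

theorem IsTightFrame.frobeniusNormSq_sum_kronecker_kronecker_le {m' n' p' q' : Type*}
    [Fintype m'] [Fintype n'] [Fintype p'] [Fintype q'] {A : ι → Matrix m n ℂ} {c : ℝ}
    (h : IsTightFrame A c) (hc : 0 ≤ c) (B : ι → Matrix p q ℂ) (C : ι → Matrix m' n' ℂ)
    (D : ι → Matrix p' q' ℂ) :
    frobeniusNormSq (∑ i, (A i ⊗ₖ B i) ⊗ₖ (C i ⊗ₖ D i)) ≤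
      c * ∑ i, frobeniusNormSq (B i) * frobeniusNormSq (C i) * frobeniusNormSq (D i) := by
  have hassoc : frobeniusNormSq (∑ i, (A i ⊗ₖ B i) ⊗ₖ (C i ⊗ₖ D i)) =
      frobeniusNormSq (∑ i, A i ⊗ₖ (B i ⊗ₖ (C i ⊗ₖ D i))) :=
    frobeniusNormSq_eq_of_equiv ((Equiv.prodAssoc _ _ _).prodCongr (Equiv.prodAssoc _ _ _))
      fun _ _ => by simp [Matrix.sum_apply, mul_assoc]
  simpa only [hassoc, frobeniusNormSq_kronecker, mul_assoc] using
    h.frobeniusNormSq_sum_kronecker_le hc fun i => B i ⊗ₖ (C i ⊗ₖ D i)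

end TightFrame

theorem sum_kronecker_mul_kronecker_mul_sum_kronecker {R ι : Type*} [CommSemiring R] [Fintype n]
    [Fintype ι] (W : ι → Matrix n n R) (T₁ T₂ T₃ T₄ : Matrix n n R) :
    (∑ k, (W k ⊗ₖ W k) ⊗ₖ (W k ⊗ₖ W k)) * ((T₁ ⊗ₖ T₂) ⊗ₖ (T₃ ⊗ₖ T₄)) *
        ∑ k, (W k ⊗ₖ W k) ⊗ₖ (W k ⊗ₖ W k) =
      ∑ x : ι × ι, ((W x.1 * T₁ * W x.2) ⊗ₖ (W x.1 * T₂ * W x.2)) ⊗ₖ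
        ((W x.1 * T₃ * W x.2) ⊗ₖ (W x.1 * T₄ * W x.2)) := by
  simp only [Matrix.sum_mul, Matrix.mul_sum, Fintype.sum_prod_type, ← mul_kronecker_mul]
  exact Finset.sum_comm

theorem IsTightFrame.frobeniusNormSq_sum_kronecker_sandwich_le [Fintype n] [DecidableEq n]
    {ι : Type*} [Fintype ι] {W : ι → Matrix n n ℂ} {c : ℝ} (hW : IsTightFrame W c)
    (hU : ∀ k, W k ∈ unitaryGroup n ℂ) (T₁ T₂ T₃ T₄ : Matrix n n ℂ) :
    frobeniusNormSq ((∑ k, (W k ⊗ₖ W k) ⊗ₖ (W k ⊗ₖ W k)) * ((T₁ ⊗ₖ T₂) ⊗ₖ (T₃ ⊗ₖ T₄)) *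
        ∑ k, (W k ⊗ₖ W k) ⊗ₖ (W k ⊗ₖ W k)) ≤
      c ^ 2 * Fintype.card ι ^ 2 * (frobeniusNormSq T₁ * frobeniusNormSq T₂ *
        frobeniusNormSq T₃ * frobeniusNormSq T₄) := by
  rw [sum_kronecker_mul_kronecker_mul_sum_kronecker]
  refine ((hW.mul_mul hW T₁).frobeniusNormSq_sum_kronecker_kronecker_le
    (mul_nonneg (mul_self_nonneg c) (frobeniusNormSq_nonneg T₁)) _ _ _).trans_eq ?_
  simp only [frobeniusNormSq_unitary_mul_mul (hU _) (hU _), Finset.sum_const, Finset.card_univ,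
    Fintype.card_prod, nsmul_eq_mul]
  push_cast
  ring

theorem stmt12_general (d : ℕ)
    (W : Fin (d ^ 2) → Matrix (Fin d) (Fin d) ℂ)
    (hherm : ∀ k, (W k)ᴴ = W k)
    (hunit : ∀ k, W k ∈ Matrix.unitaryGroup (Fin d) ℂ)
    (horth : ∀ k l, (W k * W l).trace = if k = l then (d : ℂ) else 0)
    (T₁ T₂ T₃ T₄ : Matrix (Fin d) (Fin d) ℂ) :
    fnorm
      ((((d : ℂ) ^ 2)⁻¹ • ∑ k, (W k ⊗ₖ W k) ⊗ₖ (W k ⊗ₖ W k)) *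
        ((T₁ ⊗ₖ T₂) ⊗ₖ (T₃ ⊗ₖ T₄)) *
        (((d : ℂ) ^ 2)⁻¹ • ∑ k, (W k ⊗ₖ W k) ⊗ₖ (W k ⊗ₖ W k)))
      ≤ (d : ℝ)⁻¹ * (fnorm T₁ * fnorm T₂ * fnorm T₃ * fnorm T₄) := by
  have hW : IsTightFrame W d :=
    isTightFrame_of_trace_conjTranspose_mul (by simp [sq]) fun k l => by
      rw [hherm, horth, Complex.ofReal_natCast]
  have hbound := hW.frobeniusNormSq_sum_kronecker_sandwich_le hunit T₁ T₂ T₃ T₄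
  rw [Fintype.card_fin, Nat.cast_pow] at hbound
  have hscale : Complex.normSq (((d : ℂ) ^ 2)⁻¹ * ((d : ℂ) ^ 2)⁻¹) * ((d : ℝ) ^ 2 * (d ^ 2) ^ 2) =
      ((d : ℝ) ^ 2)⁻¹ := by
    rcases eq_or_ne (d : ℝ) 0 with hd | hd
    · simp [hd]
    · simp [Complex.normSq_mul]
      field_simp
  simp only [fnorm_eq_sqrt_frobeniusNormSq]
  rw [Matrix.smul_mul, smul_mul_smul_comm, frobeniusNormSq_smul]
  calc _ ≤ √(((d : ℝ) ^ 2)⁻¹ * (frobeniusNormSq T₁ * frobeniusNormSq T₂ *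
          frobeniusNormSq T₃ * frobeniusNormSq T₄)) := by
        refine Real.sqrt_le_sqrt ?_
        rw [← hscale, mul_assoc (Complex.normSq _)]
        exact mul_le_mul_of_nonneg_left hbound (Complex.normSq_nonneg _)
    _ = _ := by
        rw [Real.sqrt_mul (inv_nonneg.2 (sq_nonneg _)), Real.sqrt_inv,
          Real.sqrt_sq (Nat.cast_nonneg d)]
        simp only [Real.sqrt_mul' _ (frobeniusNormSq_nonneg _)]

theorem stmt12 (d : ℕ) (hd : 1 ≤ d)
    (W : Fin (d ^ 2) → Matrix (Fin d) (Fin d) ℂ)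
    (hherm : ∀ k, (W k)ᴴ = W k)
    (hunit : ∀ k, W k ∈ Matrix.unitaryGroup (Fin d) ℂ)
    (horth : ∀ k l, (W k * W l).trace = if k = l then (d : ℂ) else 0)
    (T₁ T₂ T₃ T₄ : Matrix (Fin d) (Fin d) ℂ) :
    fnorm
      ((((d : ℂ) ^ 2)⁻¹ • ∑ k, (W k ⊗ₖ W k) ⊗ₖ (W k ⊗ₖ W k)) *
        ((T₁ ⊗ₖ T₂) ⊗ₖ (T₃ ⊗ₖ T₄)) *
        (((d : ℂ) ^ 2)⁻¹ • ∑ k, (W k ⊗ₖ W k) ⊗ₖ (W k ⊗ₖ W k)))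
      ≤ (d : ℝ)⁻¹ * (fnorm T₁ * fnorm T₂ * fnorm T₃ * fnorm T₄) :=
  stmt12_general d W hherm hunit horth T₁ T₂ T₃ T₄

end
end

section
/- Let S be a real-valued random variable (on a probability space) such that E[|S|^k] ≤ k! for every positive integer k. Then for every t ≥ 0, P[S ≥ t] ≤ e^{−κt + 2}, where κ = 1 − 1/(2e). -/
/- STATEMENT 14: If a real random variable S satisfies E[|S|^k] ≤ k! for every positive
integer k, then for every t ≥ 0, P[S ≥ t] ≤ e^{−κt + 2} with κ = 1 − 1/(2e). -/

open MeasureTheory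

noncomputable section

/-- `x ≤ e^(x/e)` for all real `x`. -/
lemma aux_le_exp_div (x : ℝ) : x ≤ Real.exp (x / Real.exp 1) := by
  have h := Real.add_one_le_exp (x / Real.exp 1 - 1)
  have he : (0:ℝ) < Real.exp 1 := Real.exp_pos 1
  calc x = Real.exp 1 * (x / Real.exp 1) := by field_simp
    _ ≤ Real.exp 1 * Real.exp (x / Real.exp 1 - 1) := by
        nlinarith [Real.add_one_le_exp (x / Real.exp 1 - 1)]
    _ = Real.exp (x / Real.exp 1) := by
        rw [← Real.exp_add]; ring_nf

/-- Stirling-type upper bound: `k! ≤ e * √k * (k/e)^k` for `k ≥ 1`. -/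
lemma fact_le (k : ℕ) (hk : 1 ≤ k) :
    (k.factorial : ℝ) ≤ Real.exp 1 * Real.sqrt k * (k / Real.exp 1) ^ k := by
  obtain ⟨m, rfl⟩ := Nat.exists_eq_add_of_le hk
  have h1 : Stirling.stirlingSeq (1 + m) ≤ Stirling.stirlingSeq 1 := by
    have := Stirling.log_stirlingSeq'_antitone (Nat.zero_le m)
    simp only [Function.comp] at this
    have hp0 : 0 < Stirling.stirlingSeq (0 + 1) := Stirling.stirlingSeq'_pos 0
    have hpm : 0 < Stirling.stirlingSeq (m + 1) := Stirling.stirlingSeq'_pos m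
    have := Real.exp_le_exp.mpr this
    rwa [Real.exp_log hpm, Real.exp_log hp0, Nat.add_comm m 1] at this
  rw [Stirling.stirlingSeq_one] at h1
  set k := 1 + m with hkdef
  have hkpos : (0:ℝ) < k := by positivity
  have hdenpos : (0:ℝ) < Real.sqrt (2 * k) * (k / Real.exp 1) ^ k := by positivity
  have hseq : Stirling.stirlingSeq k =
      (k.factorial : ℝ) / (Real.sqrt (2 * k) * (k / Real.exp 1) ^ k) := rfl
  rw [hseq, div_le_div_iff₀ hdenpos (by positivity : (0:ℝ) < Real.sqrt 2)] at h1
  have hsqrt : Real.sqrt (2 * k) = Real.sqrt 2 * Real.sqrt k := Real.sqrt_mul (by norm_num) _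
  have h2 : (0:ℝ) < Real.sqrt 2 := by positivity
  have h3 : (k.factorial:ℝ) * Real.sqrt 2
      ≤ (Real.exp 1 * Real.sqrt k * (k / Real.exp 1) ^ k) * Real.sqrt 2 := by
    rw [hsqrt] at h1; ring_nf at h1 ⊢; linarith
  exact le_of_mul_le_mul_right h3 h2



/-- Key inequality: for `k ≤ t ≤ k+1`, `k ≥ 1`, we have `k! ≤ t^k e^(-κt+2)`. -/
lemma key_ineq (k : ℕ) (hk : 1 ≤ k) (t : ℝ) (ht1 : (k:ℝ) ≤ t) (ht2 : t ≤ (k:ℝ) + 1) :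
    (k.factorial : ℝ) ≤ t ^ k * Real.exp (-(1 - 1 / (2 * Real.exp 1)) * t + 2) := by
  have he : (0:ℝ) < Real.exp 1 := Real.exp_pos 1
  have he1 : (1:ℝ) ≤ Real.exp 1 := Real.one_le_exp zero_le_one
  have hkpos : (0:ℝ) < k := by exact_mod_cast hk
  have hκ : (0:ℝ) < 1 - 1 / (2 * Real.exp 1) := by
    have : 1 / (2 * Real.exp 1) ≤ 1/2 := by
      apply one_div_le_one_div_of_le <;> nlinarith
    linarith
  have hek : Real.exp 1 ^ k = Real.exp k := by
    rw [← Real.exp_nat_mul]; ring_nf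
  have hsqrt : Real.sqrt k ≤ Real.exp (((k:ℝ)+1)/(2*Real.exp 1)) := by
    have h1 : (k:ℝ) ≤ Real.exp (((k:ℝ)+1)/Real.exp 1) := by
      refine (aux_le_exp_div k).trans (Real.exp_le_exp.mpr ?_)
      gcongr; linarith
    have h2 : Real.exp (((k:ℝ)+1)/Real.exp 1)
        = Real.exp (((k:ℝ)+1)/(2*Real.exp 1)) ^ 2 := by
      rw [sq, ← Real.exp_add]; congr 1; field_simp; ring
    calc Real.sqrt k ≤ Real.sqrt (Real.exp (((k:ℝ)+1)/Real.exp 1)) := Real.sqrt_le_sqrt h1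
      _ = Real.exp (((k:ℝ)+1)/(2*Real.exp 1)) := by
          rw [h2, Real.sqrt_sq (Real.exp_pos _).le]
  have heq : Real.exp 1 * Real.exp (((k:ℝ)+1)/(2*Real.exp 1)) / Real.exp 1 ^ k
      = Real.exp (-(1 - 1/(2*Real.exp 1)) * ((k:ℝ)+1) + 2) := by
    rw [hek, ← Real.exp_add, ← Real.exp_sub]; congr 1; field_simp; ring
  calc (k.factorial : ℝ)
      ≤ Real.exp 1 * Real.sqrt k * ((k:ℝ)/Real.exp 1) ^ k := fact_le k hk
    _ = (Real.exp 1 * Real.sqrt k / Real.exp 1 ^ k) * (k:ℝ) ^ k := by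
        rw [div_pow]; field_simp
    _ ≤ (Real.exp 1 * Real.exp (((k:ℝ)+1)/(2*Real.exp 1)) / Real.exp 1 ^ k) * (k:ℝ) ^ k := by
        gcongr
    _ = Real.exp (-(1 - 1/(2*Real.exp 1)) * ((k:ℝ)+1) + 2) * (k:ℝ) ^ k := by rw [heq]
    _ ≤ Real.exp (-(1 - 1/(2*Real.exp 1)) * t + 2) * t ^ k := by
        apply mul_le_mul
        · exact Real.exp_le_exp.mpr (by nlinarith)
        · exact pow_le_pow_left₀ hkpos.le ht1 k
        · positivity
        · positivity
    _ = t ^ k * Real.exp (-(1 - 1/(2*Real.exp 1)) * t + 2) := mul_comm _ _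


theorem stmt14 {Ω : Type*} [MeasurableSpace Ω]
    (P : Measure Ω) [IsProbabilityMeasure P]
    (S : Ω → ℝ) (hS : Measurable S)
    (hint : ∀ k : ℕ, 1 ≤ k → Integrable (fun ω => |S ω| ^ k) P)
    (hmom : ∀ k : ℕ, 1 ≤ k → (∫ ω, |S ω| ^ k ∂P) ≤ (k.factorial : ℝ)) :
    ∀ t : ℝ, 0 ≤ t →
      P {ω | t ≤ S ω} ≤
        ENNReal.ofReal (Real.exp (-(1 - 1 / (2 * Real.exp 1)) * t + 2)) := by
  --
  intro t ht
  have he : (0:ℝ) < Real.exp 1 := Real.exp_pos 1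
  have he1 : (1:ℝ) ≤ Real.exp 1 := Real.one_le_exp zero_le_one
  by_cases hcase : t ≤ 2
  · -- trivial: RHS ≥ 1
    have hexp : (1:ℝ) ≤ Real.exp (-(1 - 1 / (2 * Real.exp 1)) * t + 2) := by
      apply Real.one_le_exp
      have h1 : 0 ≤ 1 / (2 * Real.exp 1) := by positivity
      nlinarith
    calc P {ω | t ≤ S ω} ≤ 1 := prob_le_one
      _ ≤ ENNReal.ofReal (Real.exp (-(1 - 1 / (2 * Real.exp 1)) * t + 2)) := by
          rw [← ENNReal.ofReal_one]; exact ENNReal.ofReal_le_ofReal hexp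
  · push_neg at hcase
    set k := ⌊t⌋₊ with hkdef
    have hk1 : 1 ≤ k := Nat.le_floor (by exact_mod_cast (by linarith : (1:ℝ) ≤ t))
    have hfl : (k:ℝ) ≤ t := Nat.floor_le ht
    have hfl2 : t ≤ (k:ℝ) + 1 := (Nat.lt_floor_add_one t).le
    have htpos : (0:ℝ) < t := by linarith
    have htk : (0:ℝ) < t ^ k := by positivity
    have hsub : {ω | t ≤ S ω} ⊆ {ω | t ^ k ≤ |S ω| ^ k} := by
      intro ω hω
      exact pow_le_pow_left₀ ht (le_trans hω (le_abs_self _)) k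
    have hmark := mul_meas_ge_le_integral_of_nonneg
      (ae_of_all P (fun ω => by positivity : ∀ ω, 0 ≤ |S ω| ^ k)) (hint k hk1) (t ^ k)
    have hB : P {ω | t ^ k ≤ |S ω| ^ k} ≠ ⊤ := measure_ne_top _ _
    have htoReal : (P {ω | t ^ k ≤ |S ω| ^ k}).toReal
        ≤ Real.exp (-(1 - 1 / (2 * Real.exp 1)) * t + 2) := by
      have h1 : t ^ k * (P {ω | t ^ k ≤ |S ω| ^ k}).toReal ≤ (k.factorial : ℝ) :=
        hmark.trans (hmom k hk1)
      have h2 := key_ineq k hk1 t hfl hfl2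
      rw [← le_div_iff₀' htk] at h1
      refine h1.trans ?_
      rw [div_le_iff₀ htk]
      linarith [h2]
    calc P {ω | t ≤ S ω} ≤ P {ω | t ^ k ≤ |S ω| ^ k} := measure_mono hsub
      _ = ENNReal.ofReal ((P {ω | t ^ k ≤ |S ω| ^ k}).toReal) :=
          (ENNReal.ofReal_toReal hB).symm
      _ ≤ ENNReal.ofReal (Real.exp (-(1 - 1 / (2 * Real.exp 1)) * t + 2)) :=
          ENNReal.ofReal_le_ofReal htoReal


end
end

section
/- Let d ≥ 2 and let 𝒳 be a hermiticity-preserving linear map on d×d complex matrices. Let P(𝒳) denote the orthogonal projection of 𝒳 onto the linear span of the unital trace-preserving hermiticity-preserving maps, with respect to the inner product (𝒳,𝒴) = (1/d²)Tr(𝒳†𝒴). Then ‖𝒳 − P(𝒳)‖² = (1/d³)·( ‖𝒳(I)‖_F² + ‖𝒳†(I)‖_F² − (2/d)·Tr(𝒳(I))² ). -/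
/- STATEMENT 19: For a hermiticity-preserving linear map 𝒳 on d×d matrices with
Hilbert–Schmidt adjoint 𝒳†, and P(𝒳) the orthogonal projection of 𝒳 onto the (real)
linear span of the unital trace-preserving maps — w.r.t. (𝒳,𝒴) = (1/d²)Tr(𝒳†𝒴) —
one has ‖𝒳 − P(𝒳)‖² = (1/d³)( ‖𝒳(I)‖_F² + ‖𝒳†(I)‖_F² − (2/d)Tr(𝒳(I))² ).
The projection P(𝒳) is characterized by membership in the span together with
orthogonality of 𝒳 − P(𝒳) to the span; the squared norms ‖M‖_F² are written as
Tr(MᴴM) and the identity is stated in ℂ. -/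

open Matrix

noncomputable section

/-- The Hilbert–Schmidt trace pairing Tr[𝒴†𝒵] of two linear maps on matrices, expanded in
the orthonormal basis of standard matrix units: Tr[𝒴†𝒵] = Σ_{ij} Tr((𝒴 E_ij)ᴴ (𝒵 E_ij)). -/
def trHS {d : ℕ} (Y Z : Matrix (Fin d) (Fin d) ℂ →ₗ[ℂ] Matrix (Fin d) (Fin d) ℂ) : ℂ :=
  ∑ i, ∑ j, ((Y (Matrix.single i j 1))ᴴ * Z (Matrix.single i j 1)).trace

/-- The inner product (𝒳,𝒴) = (1/d²)·Tr(𝒳†𝒴) on linear maps. -/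
def ipMaps {d : ℕ} (Y Z : Matrix (Fin d) (Fin d) ℂ →ₗ[ℂ] Matrix (Fin d) (Fin d) ℂ) : ℂ :=
  ((d : ℂ) ^ 2)⁻¹ * trHS Y Z

/-- The set of hermiticity-preserving, unital, trace-preserving linear maps. -/
def UTPset (d : ℕ) : Set (Matrix (Fin d) (Fin d) ℂ →ₗ[ℂ] Matrix (Fin d) (Fin d) ℂ) :=
  {Z | (∀ A, Z Aᴴ = (Z A)ᴴ) ∧ Z 1 = 1 ∧ ∀ A, (Z A).trace = A.trace}

/-
Write |P⟩⟨S| for the map A ↦ Tr(S†A)·P (`hsRankOne P S`); then Tr(𝒵†|P⟩⟨S|) = Tr(𝒵(S)†P).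
Let t = Tr 𝒳(I)/d, which is real because 𝒳(I) is Hermitian, and
𝒟 = (1/d)(|𝒳(I) − tI⟩⟨I| + |I⟩⟨𝒳†(I) − tI|) (`utpResidual`). For a unital trace-preserving 𝒵 the
pairing (𝒵, 𝒟) only involves Tr(𝒳(I) − tI) and Tr(𝒳†(I) − tI), both zero, so 𝒟 is orthogonal to the
span. On the other hand 𝒳 − 𝒟 is hermiticity-preserving, sends I to tI and multiplies traces by t,
so it is (t − 1)·id plus a unital trace-preserving map. Hence 𝒳 − P(𝒳) = 𝒟, and
‖𝒟‖² = (𝒳, 𝒟) is a short trace computation.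
-/

section

variable {d : ℕ}

local notation "𝕄" d:max => Matrix (Fin d) (Fin d) ℂ

lemma trHS_add_left (Y Z W : 𝕄 d →ₗ[ℂ] 𝕄 d) : trHS (Y + Z) W = trHS Y W + trHS Z W := by
  simp [trHS, add_mul, Finset.sum_add_distrib]

lemma trHS_sub_left (Y Z W : 𝕄 d →ₗ[ℂ] 𝕄 d) : trHS (Y - Z) W = trHS Y W - trHS Z W := by
  simp [trHS, sub_mul, Finset.sum_sub_distrib]

lemma trHS_real_smul_left (r : ℝ) (Y W : 𝕄 d →ₗ[ℂ] 𝕄 d) : trHS (r • Y) W = r * trHS Y W := by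
  simp [trHS, Finset.mul_sum, ← Complex.coe_smul]

lemma trHS_add_right (Y Z W : 𝕄 d →ₗ[ℂ] 𝕄 d) : trHS Y (Z + W) = trHS Y Z + trHS Y W := by
  simp [trHS, mul_add, Finset.sum_add_distrib]

lemma trHS_sub_right (Y Z W : 𝕄 d →ₗ[ℂ] 𝕄 d) : trHS Y (Z - W) = trHS Y Z - trHS Y W := by
  simp [trHS, mul_sub, Finset.sum_sub_distrib]

lemma ipMaps_sub_left (Y Z W : 𝕄 d →ₗ[ℂ] 𝕄 d) : ipMaps (Y - Z) W = ipMaps Y W - ipMaps Z W := by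
  simp only [ipMaps, trHS_sub_left, mul_sub]

lemma ipMaps_sub_right (Y Z W : 𝕄 d →ₗ[ℂ] 𝕄 d) : ipMaps Y (Z - W) = ipMaps Y Z - ipMaps Y W := by
  simp only [ipMaps, trHS_sub_right, mul_sub]

lemma ipMaps_sub_self_eq_of_orthogonal {K : Submodule ℝ (𝕄 d →ₗ[ℂ] 𝕄 d)}
    {X PX D : 𝕄 d →ₗ[ℂ] 𝕄 d} (hPX : PX ∈ K) (horth : ∀ Z ∈ K, ipMaps (X - PX) Z = 0)
    (hD : ∀ Z ∈ K, ipMaps Z D = 0) (hXD : X - D ∈ K) :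
    ipMaps (X - PX) (X - PX) = ipMaps X D := by
  have hX : ipMaps (X - PX) X = ipMaps (X - PX) D := by
    simpa [ipMaps_sub_right, sub_eq_zero] using horth _ hXD
  calc ipMaps (X - PX) (X - PX) = ipMaps (X - PX) X := by
        rw [ipMaps_sub_right, horth PX hPX, sub_zero]
    _ = ipMaps (X - PX) D := hX
    _ = ipMaps X D := by rw [ipMaps_sub_left, hD PX hPX, sub_zero]

lemma mem_span_UTPset_of {Y : 𝕄 d →ₗ[ℂ] 𝕄 d} (c : ℝ) (hY : ∀ A, Y Aᴴ = (Y A)ᴴ)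
    (h1 : Y 1 = (c : ℂ) • 1) (htr : ∀ A, (Y A).trace = c * A.trace) :
    Y ∈ Submodule.span ℝ (UTPset d) := by
  have hid : LinearMap.id ∈ UTPset d := ⟨fun _ => rfl, rfl, fun _ => rfl⟩
  have hW : Y + (1 - c) • LinearMap.id ∈ UTPset d := by
    refine ⟨fun A => ?_, ?_, fun A => ?_⟩
    · simp [hY]
    · simp [h1, ← Complex.coe_smul, ← add_smul]
    · simp [htr, ← Complex.coe_smul]
      ring
  have hsplit : Y = (Y + (1 - c) • LinearMap.id) + (c - 1) • LinearMap.id := by module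
  rw [hsplit]
  exact add_mem (Submodule.subset_span hW) (Submodule.smul_mem _ _ (Submodule.subset_span hid))

-- `hR` says `R = 𝒳†(I)`.
lemma isHermitian_of_trace_apply_eq {X : 𝕄 d →ₗ[ℂ] 𝕄 d} (hX : ∀ A, X Aᴴ = (X A)ᴴ) {R : 𝕄 d}
    (hR : ∀ B, (X B).trace = (Rᴴ * B).trace) : R.IsHermitian := by
  refine Matrix.ext_iff_trace_mul_left.mpr fun B => ?_
  calc (B * Rᴴ).trace = (X B).trace := by rw [Matrix.trace_mul_comm, hR]
    _ = star (X Bᴴ).trace := by rw [hX, Matrix.trace_conjTranspose, star_star]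
    _ = (B * R).trace := by
      rw [hR, ← Matrix.trace_conjTranspose, Matrix.conjTranspose_mul,
        Matrix.conjTranspose_conjTranspose, Matrix.conjTranspose_conjTranspose]

lemma isHermitian_apply_one {X : 𝕄 d →ₗ[ℂ] 𝕄 d} (hX : ∀ A, X Aᴴ = (X A)ᴴ) :
    (X 1).IsHermitian := by
  simpa [Matrix.IsHermitian] using (hX 1).symm

lemma Matrix.IsHermitian.conj_trace {M : 𝕄 d} (hM : M.IsHermitian) :
    starRingEnd ℂ M.trace = M.trace := by
  rw [← Complex.star_def, ← Matrix.trace_conjTranspose, hM.eq]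

def hsRankOne (P S : 𝕄 d) : 𝕄 d →ₗ[ℂ] 𝕄 d :=
  ((Matrix.traceLinearMap (Fin d) ℂ ℂ).comp (LinearMap.mulLeft ℂ Sᴴ)).smulRight P

@[simp]
lemma hsRankOne_apply (P S A : 𝕄 d) : hsRankOne P S A = (Sᴴ * A).trace • P := rfl

lemma trHS_hsRankOne (Y : 𝕄 d →ₗ[ℂ] 𝕄 d) (P S : 𝕄 d) :
    trHS Y (hsRankOne P S) = ((Y S)ᴴ * P).trace := by
  have hS : S = ∑ i, ∑ j, S i j • single i j (1 : ℂ) := by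
    simpa [Matrix.smul_single] using Matrix.matrix_eq_sum_single S
  conv_rhs => rw [hS]
  simp only [map_sum, map_smul, Matrix.conjTranspose_sum, Matrix.conjTranspose_smul,
    Finset.sum_mul, Matrix.smul_mul, Matrix.trace_sum, Matrix.trace_smul]
  simp [trHS, Matrix.trace_mul_single]

lemma hsRankOne_conjTranspose {P S : 𝕄 d} (hP : P.IsHermitian) (hS : S.IsHermitian) (A : 𝕄 d) :
    hsRankOne P S Aᴴ = (hsRankOne P S A)ᴴ := by
  rw [hsRankOne_apply, hsRankOne_apply, Matrix.conjTranspose_smul, hP.eq,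
    ← Matrix.trace_conjTranspose, Matrix.conjTranspose_mul, Matrix.conjTranspose_conjTranspose,
    Matrix.trace_mul_comm, hS.eq]

def tracelessPart (M : 𝕄 d) : 𝕄 d := M - (M.trace / d) • 1

lemma trace_tracelessPart (hd : d ≠ 0) (M : 𝕄 d) : (tracelessPart M).trace = 0 := by
  simp [tracelessPart, hd]

lemma isHermitian_tracelessPart {M : 𝕄 d} (hM : M.IsHermitian) : (tracelessPart M).IsHermitian :=
  hM.sub (Matrix.isHermitian_one.smul (by simp [IsSelfAdjoint, hM.conj_trace]))

def utpResidual (M R : 𝕄 d) : 𝕄 d →ₗ[ℂ] 𝕄 d :=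
  hsRankOne ((d : ℂ)⁻¹ • tracelessPart M) 1 + hsRankOne 1 ((d : ℂ)⁻¹ • tracelessPart R)

lemma utpResidual_apply_one (hd : d ≠ 0) (M R : 𝕄 d) : utpResidual M R 1 = tracelessPart M := by
  simp [utpResidual, trace_tracelessPart hd, hd]

lemma trace_utpResidual_apply (hd : d ≠ 0) (M R A : 𝕄 d) :
    (utpResidual M R A).trace = (Rᴴ * A).trace - star (R.trace / d) * A.trace := by
  simp [utpResidual, tracelessPart, sub_mul, Matrix.trace_sub]
  field_simp
  ring

lemma utpResidual_conjTranspose {M R : 𝕄 d} (hM : M.IsHermitian) (hR : R.IsHermitian) (A : 𝕄 d) :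
    utpResidual M R Aᴴ = (utpResidual M R A)ᴴ := by
  have hdinv : IsSelfAdjoint ((d : ℂ)⁻¹) := by simp [IsSelfAdjoint]
  rw [utpResidual, LinearMap.add_apply, LinearMap.add_apply, Matrix.conjTranspose_add,
    hsRankOne_conjTranspose ((isHermitian_tracelessPart hM).smul hdinv) Matrix.isHermitian_one,
    hsRankOne_conjTranspose Matrix.isHermitian_one ((isHermitian_tracelessPart hR).smul hdinv)]

lemma ipMaps_utpResidual_eq_zero_of_mem_span (hd : d ≠ 0) {Z : 𝕄 d →ₗ[ℂ] 𝕄 d}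
    (hZ : Z ∈ Submodule.span ℝ (UTPset d)) (M R : 𝕄 d) : ipMaps Z (utpResidual M R) = 0 := by
  suffices trHS Z (utpResidual M R) = 0 by rw [ipMaps, this, mul_zero]
  induction hZ using Submodule.span_induction with
  | mem Z hZ =>
    obtain ⟨-, h1, htr⟩ := hZ
    simp [utpResidual, trHS_add_right, trHS_hsRankOne, h1, htr, trace_tracelessPart hd]
  | zero => simp [trHS]
  | add Y Z _ _ hY hZ => rw [trHS_add_left, hY, hZ, add_zero]
  | smul r Y _ hY => rw [trHS_real_smul_left, hY, mul_zero]

lemma sub_utpResidual_mem_span (hd : d ≠ 0) {X : 𝕄 d →ₗ[ℂ] 𝕄 d} (hX : ∀ A, X Aᴴ = (X A)ᴴ)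
    {R : 𝕄 d} (hR : ∀ B, (X B).trace = (Rᴴ * B).trace) :
    X - utpResidual (X 1) R ∈ Submodule.span ℝ (UTPset d) := by
  have hM := isHermitian_apply_one hX
  have hRh : R.IsHermitian := isHermitian_of_trace_apply_eq hX hR
  have htrR : R.trace = (X 1).trace := by simpa [hRh.eq] using (hR 1).symm
  set t := (X 1).trace / d
  have ht : (t.re : ℂ) = t := Complex.conj_eq_iff_re.mp (by simp [t, hM.conj_trace])
  refine mem_span_UTPset_of t.re (fun A => ?_) ?_ (fun A => ?_)
  · simp [hX, utpResidual_conjTranspose hM hRh]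
  · rw [LinearMap.sub_apply, utpResidual_apply_one hd, tracelessPart, sub_sub_cancel, ht]
  · rw [LinearMap.sub_apply, Matrix.trace_sub, trace_utpResidual_apply hd, hR, htrR, ht]
    simp [t, hM.conj_trace]

lemma ipMaps_utpResidual (hd : d ≠ 0) {X : 𝕄 d →ₗ[ℂ] 𝕄 d} (hX : ∀ A, X Aᴴ = (X A)ᴴ)
    {R : 𝕄 d} (hR : ∀ B, (X B).trace = (Rᴴ * B).trace) :
    ipMaps X (utpResidual (X 1) R) = ((d : ℂ) ^ 3)⁻¹ *
      (((X 1)ᴴ * X 1).trace + (Rᴴ * R).trace - 2 * (d : ℂ)⁻¹ * ((X 1).trace) ^ 2) := by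
  have hM := isHermitian_apply_one hX
  have htrR : R.trace = (X 1).trace := by
    simpa [hM.conj_trace] using (congrArg star (hR 1)).symm
  have hRR : starRingEnd ℂ (X R).trace = (Rᴴ * R).trace := by
    rw [hR, ← Complex.star_def, ← Matrix.trace_conjTranspose, Matrix.conjTranspose_mul,
      Matrix.conjTranspose_conjTranspose]
  simp [ipMaps, utpResidual, trHS_add_right, trHS_hsRankOne, tracelessPart, hRR, htrR,
    hM.conj_trace, Matrix.mul_sub, Matrix.trace_sub]
  field_simp
  ring

end

theorem stmt19_general (d : ℕ)
    (X : Matrix (Fin d) (Fin d) ℂ →ₗ[ℂ] Matrix (Fin d) (Fin d) ℂ)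
    (hherm : ∀ A, X Aᴴ = (X A)ᴴ)
    -- Xd is the adjoint 𝒳† of 𝒳 w.r.t. the Hilbert–Schmidt inner product on matrices
    (Xd : Matrix (Fin d) (Fin d) ℂ →ₗ[ℂ] Matrix (Fin d) (Fin d) ℂ)
    (hXd : ∀ A B : Matrix (Fin d) (Fin d) ℂ, ((Xd A)ᴴ * B).trace = (Aᴴ * X B).trace)
    -- PX is the orthogonal projection of 𝒳 onto the span of unital trace-preserving maps
    (PX : Matrix (Fin d) (Fin d) ℂ →ₗ[ℂ] Matrix (Fin d) (Fin d) ℂ)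
    (hmem : PX ∈ Submodule.span ℝ (UTPset d))
    (horth : ∀ Z ∈ Submodule.span ℝ (UTPset d), ipMaps (X - PX) Z = 0) :
    ipMaps (X - PX) (X - PX)
      = ((d : ℂ) ^ 3)⁻¹ *
          ( ((X 1)ᴴ * X 1).trace + ((Xd 1)ᴴ * Xd 1).trace
            - 2 * (d : ℂ)⁻¹ * ((X 1).trace) ^ 2 ) := by
  rcases eq_or_ne d 0 with rfl | hd
  · simp [ipMaps]
  have hR : ∀ B, (X B).trace = ((Xd 1)ᴴ * B).trace := fun B => by simpa using (hXd 1 B).symm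
  calc ipMaps (X - PX) (X - PX) = ipMaps X (utpResidual (X 1) (Xd 1)) :=
        ipMaps_sub_self_eq_of_orthogonal hmem horth
          (fun _ hZ => ipMaps_utpResidual_eq_zero_of_mem_span hd hZ _ _)
          (sub_utpResidual_mem_span hd hherm hR)
    _ = _ := ipMaps_utpResidual hd hherm hR

theorem stmt19 (d : ℕ) (hd : 2 ≤ d)
    (X : Matrix (Fin d) (Fin d) ℂ →ₗ[ℂ] Matrix (Fin d) (Fin d) ℂ)
    (hherm : ∀ A, X Aᴴ = (X A)ᴴ)
    -- Xd is the adjoint 𝒳† of 𝒳 w.r.t. the Hilbert–Schmidt inner product on matrices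
    (Xd : Matrix (Fin d) (Fin d) ℂ →ₗ[ℂ] Matrix (Fin d) (Fin d) ℂ)
    (hXd : ∀ A B : Matrix (Fin d) (Fin d) ℂ, ((Xd A)ᴴ * B).trace = (Aᴴ * X B).trace)
    -- PX is the orthogonal projection of 𝒳 onto the span of unital trace-preserving maps
    (PX : Matrix (Fin d) (Fin d) ℂ →ₗ[ℂ] Matrix (Fin d) (Fin d) ℂ)
    (hmem : PX ∈ Submodule.span ℝ (UTPset d))
    (horth : ∀ Z ∈ Submodule.span ℝ (UTPset d), ipMaps (X - PX) Z = 0) :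
    ipMaps (X - PX) (X - PX)
      = ((d : ℂ) ^ 3)⁻¹ *
          ( ((X 1)ᴴ * X 1).trace + ((Xd 1)ᴴ * Xd 1).trace
            - 2 * (d : ℂ)⁻¹ * ((X 1).trace) ^ 2 ) :=
  stmt19_general d X hherm Xd hXd PX hmem horth

end
end
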